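/- A one-hidden-layer P-ReLU network with N hidden neurons and K = 2 outputs can be represented by an oblique decision tree of depth N + 1: there exist affine decision functions, one per hidden neuron plus one for the output difference, such that the tree's leaf assignment equals the network's argmin-treatment map on all of ℝ^d. -/

import Mathlib

/-!
The first `N` levels of the tree test the signs of the hidden pre-activations `W₁ j ⬝ᵥ x + b₁ j`,
whatever the path. Once this activation pattern `q` is known, every ReLU acts on `x` either as the
identity or as zero, so `f x 1 - f x 0` agrees with an affine function of `x` determined by `q`
on the whole region of pattern `q`; the last level tests the sign of that affine function.
-/

open Matrix Finset

section ObliqueTree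

variable {d n : ℕ}

/-- The node at depth `i` of an oblique tree is addressed by the outcomes of the `i` tests above
it, and tests `0 ≤ ω ⬝ᵥ x + β`; `p` lists the outcomes of the tests along the path of `x`. -/
def IsObliquePath (ω : (i : Fin n) → (Fin i → Bool) → Fin d → ℝ)
    (β : (i : Fin n) → (Fin i → Bool) → ℝ) (x : Fin d → ℝ) (p : Fin n → Bool) : Prop :=
  ∀ i : Fin n, 0 ≤ ω i (fun j => p (Fin.castLE i.isLt.le j)) ⬝ᵥ x
      + β i (fun j => p (Fin.castLE i.isLt.le j)) ↔ p i = true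

/-- Node data of a tree whose first `n` levels ignore the path and whose last level may depend on
all `n` earlier outcomes. -/
def lastCasesNode {α : Type*} (A : Fin n → α) (C : (Fin n → Bool) → α) :
    (i : Fin (n + 1)) → (Fin i → Bool) → α :=
  Fin.lastCases (motive := fun i => (Fin i → Bool) → α) C (fun j _ => A j)

noncomputable def halfspacePattern (A : Fin n → Fin d → ℝ) (a : Fin n → ℝ) (x : Fin d → ℝ) :
    Fin n → Bool :=
  fun j => decide (0 ≤ A j ⬝ᵥ x + a j)

theorem iff_eq_true_iff_eq_decide {P : Prop} [Decidable P] {b : Bool} :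
    (P ↔ b = true) ↔ b = decide P := by
  cases b <;> simp

theorem isObliquePath_lastCasesNode_iff (A : Fin n → Fin d → ℝ) (a : Fin n → ℝ)
    (C : (Fin n → Bool) → Fin d → ℝ) (c : (Fin n → Bool) → ℝ) (x : Fin d → ℝ)
    (p : Fin (n + 1) → Bool) :
    IsObliquePath (lastCasesNode A C) (lastCasesNode a c) x p ↔
      Fin.init p = halfspacePattern A a x ∧
        p (Fin.last n) = decide (0 ≤ C (Fin.init p) ⬝ᵥ x + c (Fin.init p)) := by
  unfold IsObliquePath
  rw [Fin.forall_fin_succ', funext_iff]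
  refine and_congr (forall_congr' fun j => ?_) ?_
  · simp only [lastCasesNode, Fin.lastCases_castSucc, Fin.init, halfspacePattern]
    exact iff_eq_true_iff_eq_decide
  · simp only [lastCasesNode, Fin.lastCases_last]
    exact iff_eq_true_iff_eq_decide

theorem exists_obliqueTree_of_eq_sign_on_patterns {α : Type*} (A : Fin n → Fin d → ℝ)
    (a : Fin n → ℝ) (C : (Fin n → Bool) → Fin d → ℝ) (c : (Fin n → Bool) → ℝ)
    (g : Bool → α) (π : (Fin d → ℝ) → α)
    (hπ : ∀ x, π x = g (decide
      (0 ≤ C (halfspacePattern A a x) ⬝ᵥ x + c (halfspacePattern A a x)))) :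
    ∃ (ω : (i : Fin (n + 1)) → (Fin i → Bool) → Fin d → ℝ)
      (β : (i : Fin (n + 1)) → (Fin i → Bool) → ℝ) (v : (Fin (n + 1) → Bool) → α),
      (∀ x, ∃ p, IsObliquePath ω β x p) ∧ ∀ x p, IsObliquePath ω β x p → π x = v p := by
  refine ⟨lastCasesNode A C, lastCasesNode a c, fun p => g (p (Fin.last n)),
    fun x => ⟨Fin.snoc (halfspacePattern A a x)
      (decide (0 ≤ C (halfspacePattern A a x) ⬝ᵥ x + c (halfspacePattern A a x))), ?_⟩,
    fun x p hp => ?_⟩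
  · rw [isObliquePath_lastCasesNode_iff, Fin.init_snoc, Fin.snoc_last]
    exact ⟨rfl, rfl⟩
  · obtain ⟨hinit, hlast⟩ := (isObliquePath_lastCasesNode_iff A a C c x p).mp hp
    rw [hπ, ← hinit, ← hlast]

theorem sum_mul_relu_eq_of_halfspacePattern (w : Fin n → ℝ) (A : Fin n → Fin d → ℝ)
    (a : Fin n → ℝ) (x : Fin d → ℝ) :
    ∑ j, w j * max (A j ⬝ᵥ x + a j) 0 =
      (∑ j with halfspacePattern A a x j, w j • A j) ⬝ᵥ x
        + ∑ j with halfspacePattern A a x j, w j * a j := by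
  rw [sum_dotProduct, sum_filter, sum_filter, ← sum_add_distrib]
  refine sum_congr rfl fun j _ => ?_
  simp only [halfspacePattern, decide_eq_true_eq, smul_dotProduct, smul_eq_mul]
  split_ifs with hj
  · rw [max_eq_left hj, mul_add]
  · rw [max_eq_right (le_of_not_ge hj), mul_zero, add_zero]

end ObliqueTree

theorem prelu_to_oblique_tree_two_treatments (d N : ℕ)
    (W₁ : Fin N → Fin d → ℝ) (b₁ : Fin N → ℝ)
    (W₂ : Fin 2 → Fin N → ℝ) (b₂ : Fin 2 → ℝ)
    (f : (Fin d → ℝ) → Fin 2 → ℝ)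
    (hf : ∀ x k, f x k = ∑ j, W₂ k j * max (∑ i, W₁ j i * x i + b₁ j) 0 + b₂ k)
    (π : (Fin d → ℝ) → Fin 2)
    (hπ : ∀ x, π x = if f x 0 ≤ f x 1 then 0 else 1) :
    -- there is an oblique decision tree of depth N + 1 computing π
    ∃ (ω : (i : Fin (N + 1)) → (Fin i → Bool) → (Fin d → ℝ))
      (β : (i : Fin (N + 1)) → (Fin i → Bool) → ℝ)
      (v : (Fin (N + 1) → Bool) → Fin 2),
      (∀ x : Fin d → ℝ, ∃ p : Fin (N + 1) → Bool, ∀ i : Fin (N + 1),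
        (0 ≤ (∑ k, ω i (fun j : Fin i => p (Fin.castLE i.isLt.le j)) k * x k)
              + β i (fun j : Fin i => p (Fin.castLE i.isLt.le j)) ↔ p i = true)) ∧
      (∀ (x : Fin d → ℝ) (p : Fin (N + 1) → Bool),
        (∀ i : Fin (N + 1),
          (0 ≤ (∑ k, ω i (fun j : Fin i => p (Fin.castLE i.isLt.le j)) k * x k)
                + β i (fun j : Fin i => p (Fin.castLE i.isLt.le j)) ↔ p i = true)) →
        π x = v p) := by
  replace hf : ∀ x k, f x k = ∑ j, W₂ k j * max (W₁ j ⬝ᵥ x + b₁ j) 0 + b₂ k := hf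
  refine exists_obliqueTree_of_eq_sign_on_patterns W₁ b₁
    (fun q => ∑ j with q j, (W₂ 1 j - W₂ 0 j) • W₁ j)
    (fun q => ∑ j with q j, (W₂ 1 j - W₂ 0 j) * b₁ j + (b₂ 1 - b₂ 0))
    (fun b => bif b then 0 else 1) π fun x => ?_
  have hdiff : f x 1 - f x 0 =
      ∑ j, (W₂ 1 j - W₂ 0 j) * max (W₁ j ⬝ᵥ x + b₁ j) 0 + (b₂ 1 - b₂ 0) := by
    simp only [hf, sub_mul, sum_sub_distrib]
    ring
  rw [hπ, Bool.cond_decide, ← add_assoc, ← sum_mul_relu_eq_of_halfspacePattern, ← hdiff]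
  simp only [sub_nonneg]
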